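/- Let ε : Fin K → ℤ and m : Fin K → Fin n → ℤ with all m_i^{(a)} ≥ 0 satisfy ∑_a ε(a) m_i^{(a)} m_j^{(a)} m_k^{(a)} = 0, ∑_a ε(a) m_i^{(a)} m_j^{(a)} = 0, and ∑_a ε(a) m_i^{(a)} = 0 for all i,j,k. Then h_i(x, pq; p) = h_i(x, q; p), where h_i(x,q;p) = ∏_a ∏_{l=0}^{m_i^{(a)}-1} θ(q^l ∏_k x_k^{m_k^{(a)}}; p)^{ε(a)}. -/

import Mathlib

/-!
Quasi-periodicity `θ(p^j z) = (-z)^{-j} p^{-C(j,2)} θ(z)` shows that replacing `q` by `p q`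
divides `∏_{l<M} θ(q^l X; p)` by the monomial
`(-1)^{C(M,2)} p^{C(M,3)} q^{C(M,2)+2C(M,3)} X^{C(M,2)}`.
In the certificate the exponents of `-1`, `p`, `q` and `x_k` in the product of these monomials
are sums `∑_a ε(a) P(m_i^{(a)})`, resp. `∑_a ε(a) m_k^{(a)} C(m_i^{(a)}, 2)`, where `P = C(·,2)`
or `C(·,3)` is a polynomial of degree at most 3 vanishing at `0`; the balancing conditions make
all of them vanish.
-/

open Complex Finset

/-- The theta function `θ(z;p) = (z;p)_∞ (p z⁻¹;p)_∞`. -/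
noncomputable def theta (p z : ℂ) : ℂ :=
  (∏' k : ℕ, (1 - z * p ^ k)) * (∏' k : ℕ, (1 - p ^ (k + 1) * z⁻¹))

/-- The `q`-certificate
`h_i(x,q;p) = ∏_a ∏_{l=0}^{m_i^{(a)}-1} θ(q^l ∏_k x_k^{m_k^{(a)}}; p)^{ε(a)}`. -/
noncomputable def certificate {K n : ℕ} (ε : Fin K → ℤ) (m : Fin K → Fin n → ℤ)
    (i : Fin n) (p q : ℂ) (x : Fin n → ℂ) : ℂ :=
  ∏ a : Fin K,
    (∏ l ∈ Finset.range (m a i).toNat, theta p (q ^ l * ∏ k : Fin n, x k ^ m a k)) ^ ε a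

theorem multipliable_one_sub_mul_pow {p : ℂ} (hp : ‖p‖ < 1) (w : ℂ) :
    Multipliable fun k : ℕ => 1 - w * p ^ k := by
  have hs : Summable fun k : ℕ => ‖-(w * p ^ k)‖ := by
    simpa [norm_mul, norm_pow] using
      (summable_geometric_of_lt_one (norm_nonneg p) hp).mul_left ‖w‖
  simpa [sub_eq_add_neg] using multipliable_one_add_of_summable hs

theorem tprod_one_sub_mul_pow {p : ℂ} (hp : ‖p‖ < 1) (w : ℂ) :
    ∏' k : ℕ, (1 - w * p ^ k) = (1 - w) * ∏' k : ℕ, (1 - p * w * p ^ k) := by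
  rw [tprod_eq_zero_mul' ((multipliable_one_sub_mul_pow hp (p * w)).congr fun k => by ring)]
  simp only [pow_zero, mul_one, pow_succ]
  congr 1
  exact tprod_congr fun k => by ring

theorem theta_mul_left {p : ℂ} (hp : ‖p‖ < 1) (hp0 : p ≠ 0) {z : ℂ} (hz : z ≠ 0) :
    theta p (p * z) = -z⁻¹ * theta p z := by
  have h₁ : ∏' k : ℕ, (1 - p ^ (k + 1) * (p * z)⁻¹) = ∏' k : ℕ, (1 - z⁻¹ * p ^ k) :=
    tprod_congr fun k => by field_simp; ring
  have h₂ : ∏' k : ℕ, (1 - p ^ (k + 1) * z⁻¹) = ∏' k : ℕ, (1 - p * z⁻¹ * p ^ k) :=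
    tprod_congr fun k => by ring
  rw [theta, theta, h₁, h₂, tprod_one_sub_mul_pow hp z, tprod_one_sub_mul_pow hp z⁻¹]
  field_simp
  ring

theorem theta_pow_mul {p : ℂ} (hp : ‖p‖ < 1) (hp0 : p ≠ 0) {z : ℂ} (hz : z ≠ 0) (j : ℕ) :
    theta p (p ^ j * z) = (-z)⁻¹ ^ j * p⁻¹ ^ j.choose 2 * theta p z := by
  induction j with
  | zero => simp
  | succ j ih =>
    rw [pow_succ', mul_assoc, theta_mul_left hp hp0 (by positivity), ih, Nat.choose_succ_succ',
      Nat.choose_one_right]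
    ring

theorem Nat.mul_self_eq_add_two_mul_choose_two (n : ℕ) : n * n = n + 2 * n.choose 2 := by
  induction n with
  | zero => rfl
  | succ n ih =>
    rw [Nat.choose_succ_succ', Nat.choose_one_right]
    linarith

theorem Nat.mul_choose_two (n : ℕ) : n * n.choose 2 = 3 * n.choose 3 + 2 * n.choose 2 := by
  induction n with
  | zero => rfl
  | succ n ih =>
    rw [Nat.choose_succ_succ' n 2, Nat.choose_succ_succ' n 1, Nat.choose_one_right]
    nlinarith [n.mul_self_eq_add_two_mul_choose_two]

def qShiftFactor (p q X : ℂ) (M : ℕ) : ℂ :=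
  (-1) ^ M.choose 2 * p ^ M.choose 3 * q ^ (M.choose 2 + 2 * M.choose 3) * X ^ M.choose 2

theorem prod_theta_mul_pow_mul {p q X : ℂ} (hp : ‖p‖ < 1) (hp0 : p ≠ 0) (hq : q ≠ 0)
    (hX : X ≠ 0) (M : ℕ) :
    ∏ l ∈ range M, theta p ((p * q) ^ l * X)
      = (qShiftFactor p q X M)⁻¹ * ∏ l ∈ range M, theta p (q ^ l * X) := by
  induction M with
  | zero => simp [qShiftFactor]
  | succ M ih =>
    have hexp : (M + 1).choose 2 + 2 * (M + 1).choose 3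
        = M.choose 2 + 2 * M.choose 3 + M * M := by
      rw [Nat.choose_succ_succ' M 2, Nat.choose_succ_succ' M 1, Nat.choose_one_right,
        M.mul_self_eq_add_two_mul_choose_two]
      ring
    rw [prod_range_succ, prod_range_succ, ih, mul_pow, mul_assoc (p ^ M),
      theta_pow_mul hp hp0 (by positivity), qShiftFactor, qShiftFactor, hexp,
      Nat.choose_succ_succ' M 2, Nat.choose_succ_succ' M 1, Nat.choose_one_right]
    simp only [mul_inv, ← inv_pow, inv_neg, inv_one]
    ring

section WeightedMoments

variable {ι : Type*} (s : Finset ι) (w : ι → ℤ) (M : ι → ℕ)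

theorem sum_mul_choose_two_eq_zero (h₁ : ∑ a ∈ s, w a * M a = 0)
    (h₂ : ∑ a ∈ s, w a * M a * M a = 0) : ∑ a ∈ s, w a * (M a).choose 2 = 0 := by
  have h : 2 * ∑ a ∈ s, w a * (M a).choose 2 = ∑ a ∈ s, w a * M a * M a - ∑ a ∈ s, w a * M a := by
    rw [mul_sum, ← sum_sub_distrib]
    refine sum_congr rfl fun a _ => ?_
    have := congrArg (Nat.cast (R := ℤ)) (M a).mul_self_eq_add_two_mul_choose_two
    push_cast at this
    linear_combination (-w a) * this
  rw [h₁, h₂, sub_zero] at h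
  simpa using h

theorem sum_mul_choose_three_eq_zero (h₁ : ∑ a ∈ s, w a * M a = 0)
    (h₂ : ∑ a ∈ s, w a * M a * M a = 0) (h₃ : ∑ a ∈ s, w a * M a * M a * M a = 0) :
    ∑ a ∈ s, w a * (M a).choose 3 = 0 := by
  have h : 6 * ∑ a ∈ s, w a * (M a).choose 3
      = ∑ a ∈ s, w a * M a * M a * M a - 3 * ∑ a ∈ s, w a * M a * M a
        + 2 * ∑ a ∈ s, w a * M a := by
    rw [mul_sum, mul_sum, mul_sum, ← sum_sub_distrib, ← sum_add_distrib]
    refine sum_congr rfl fun a _ => ?_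
    have h2 := congrArg (Nat.cast (R := ℤ)) (M a).mul_self_eq_add_two_mul_choose_two
    have h3 := congrArg (Nat.cast (R := ℤ)) (M a).mul_choose_two
    push_cast at h2 h3
    linear_combination (-2 * w a) * h3 - (w a * (M a - 2)) * h2
  rw [h₁, h₂, h₃] at h
  simpa using h

end WeightedMoments

theorem prod_zpow_eq_zpow_sum {ι G₀ : Type*} [CommGroupWithZero G₀] {u : G₀} (hu : u ≠ 0)
    (s : Finset ι) (f : ι → ℤ) : ∏ a ∈ s, u ^ f a = u ^ ∑ a ∈ s, f a := by
  classical
  induction s using Finset.induction with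
  | empty => simp
  | insert a s ha ih => rw [prod_insert ha, sum_insert ha, zpow_add₀ hu, ih]

theorem prod_pow_zpow_eq_one {ι G₀ : Type*} [CommGroupWithZero G₀] {u : G₀} (hu : u ≠ 0)
    {s : Finset ι} {e : ι → ℕ} {ε : ι → ℤ} (h : ∑ a ∈ s, ε a * e a = 0) :
    ∏ a ∈ s, (u ^ e a) ^ ε a = 1 := by
  simp_rw [← zpow_natCast, ← zpow_mul, mul_comm, prod_zpow_eq_zpow_sum hu, h, zpow_zero]

theorem prod_qShiftFactor_zpow_eq_one {ι κ : Type*} {s : Finset ι} {t : Finset κ} {p q : ℂ}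
    (hp0 : p ≠ 0) (hq : q ≠ 0) {x : κ → ℂ} (hx : ∀ k, x k ≠ 0) {m : ι → κ → ℤ}
    {M : ι → ℕ} {ε : ι → ℤ} (h₂ : ∑ a ∈ s, ε a * (M a).choose 2 = 0)
    (h₃ : ∑ a ∈ s, ε a * (M a).choose 3 = 0)
    (hX : ∀ k, ∑ a ∈ s, ε a * m a k * (M a).choose 2 = 0) :
    ∏ a ∈ s, qShiftFactor p q (∏ k ∈ t, x k ^ m a k) (M a) ^ ε a = 1 := by
  have h₂₃ : ∑ a ∈ s, ε a * ((M a).choose 2 + 2 * (M a).choose 3 : ℕ) = 0 := by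
    push_cast
    simp only [mul_add, sum_add_distrib, mul_left_comm _ (2 : ℤ), ← mul_sum, h₂, h₃, mul_zero,
      add_zero]
  have hmonomial : ∀ a, ((∏ k ∈ t, x k ^ m a k) ^ (M a).choose 2) ^ ε a
      = ∏ k ∈ t, x k ^ (ε a * m a k * (M a).choose 2) := by
    intro a
    rw [← zpow_natCast, ← zpow_mul, ← prod_zpow]
    refine prod_congr rfl fun k _ => ?_
    rw [← zpow_mul]
    congr 1
    ring
  simp only [qShiftFactor, mul_zpow, prod_mul_distrib, hmonomial]
  rw [prod_pow_zpow_eq_one (neg_ne_zero.2 one_ne_zero) h₂, prod_pow_zpow_eq_one hp0 h₃,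
    prod_pow_zpow_eq_one hq h₂₃, prod_comm]
  simp [prod_zpow_eq_zpow_sum (hx _), hX]

theorem certificate_mul_left {K n : ℕ} (ε : Fin K → ℤ) (m : Fin K → Fin n → ℤ) (i : Fin n)
    {p q : ℂ} (hp : ‖p‖ < 1) (hp0 : p ≠ 0) (hq : q ≠ 0) {x : Fin n → ℂ} (hx : ∀ k, x k ≠ 0) :
    certificate ε m i p (p * q) x
      = (∏ a, qShiftFactor p q (∏ k, x k ^ m a k) (m a i).toNat ^ ε a)⁻¹
        * certificate ε m i p q x := by
  rw [certificate, certificate, ← prod_inv_distrib, ← prod_mul_distrib]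
  refine prod_congr rfl fun a _ => ?_
  rw [prod_theta_mul_pow_mul hp hp0 hq (prod_ne_zero_iff.2 fun k _ => zpow_ne_zero _ (hx k)),
    mul_zpow, inv_zpow]

theorem certificate_p_elliptic_in_q_general (K n : ℕ) (ε : Fin K → ℤ) (m : Fin K → Fin n → ℤ)
    (hm : ∀ (a : Fin K) (k : Fin n), 0 ≤ m a k)
    (hcube : ∀ i j k : Fin n, ∑ a : Fin K, ε a * m a i * m a j * m a k = 0)
    (hquad : ∀ i j : Fin n, ∑ a : Fin K, ε a * m a i * m a j = 0)
    (hlin : ∀ i : Fin n, ∑ a : Fin K, ε a * m a i = 0)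
    (i : Fin n) (p q : ℂ) (hp : ‖p‖ < 1) (hp0 : p ≠ 0) (hq : q ≠ 0)
    (x : Fin n → ℂ) (hx : ∀ k, x k ≠ 0) :
    certificate ε m i p (p * q) x = certificate ε m i p q x := by
  have hM : ∀ a, ((m a i).toNat : ℤ) = m a i := fun a => Int.toNat_of_nonneg (hm a i)
  have h₁ : ∑ a, ε a * (m a i).toNat = 0 := by simpa only [hM] using hlin i
  have h₂ : ∑ a, ε a * (m a i).toNat * (m a i).toNat = 0 := by simpa only [hM] using hquad i i
  have h₃ : ∑ a, ε a * (m a i).toNat * (m a i).toNat * (m a i).toNat = 0 := by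
    simpa only [hM] using hcube i i i
  have hX : ∀ k, ∑ a, ε a * m a k * (m a i).toNat.choose 2 = 0 := fun k =>
    sum_mul_choose_two_eq_zero _ _ _
      (by rw [← hquad i k]; exact sum_congr rfl fun a _ => by rw [hM]; ring)
      (by rw [← hcube i i k]; exact sum_congr rfl fun a _ => by rw [hM]; ring)
  rw [certificate_mul_left ε m i hp hp0 hq hx, prod_qShiftFactor_zpow_eq_one hp0 hq hx
    (sum_mul_choose_two_eq_zero _ _ _ h₁ h₂) (sum_mul_choose_three_eq_zero _ _ _ h₁ h₂ h₃) hX,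
    inv_one, one_mul]

/-- Rains–Spiridonov (the `q ↦ pq` half): under the diophantine conditions, the
certificate is invariant under `q ↦ p q`. -/
theorem certificate_p_elliptic_in_q (K n : ℕ) (ε : Fin K → ℤ) (m : Fin K → Fin n → ℤ)
    (hm : ∀ (a : Fin K) (k : Fin n), 0 ≤ m a k)
    (hcube : ∀ i j k : Fin n, ∑ a : Fin K, ε a * m a i * m a j * m a k = 0)
    (hquad : ∀ i j : Fin n, ∑ a : Fin K, ε a * m a i * m a j = 0)
    (hlin : ∀ i : Fin n, ∑ a : Fin K, ε a * m a i = 0)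
    (i : Fin n) (p q : ℂ) (hp : ‖p‖ < 1) (hp0 : p ≠ 0) (hq : q ≠ 0)
    (x : Fin n → ℂ) (hx : ∀ k, x k ≠ 0)
    (hθ : ∀ (a : Fin K) (l : ℕ),
      theta p (q ^ l * ∏ k : Fin n, x k ^ m a k) ≠ 0)
    (hθ' : ∀ (a : Fin K) (l : ℕ),
      theta p ((p * q) ^ l * ∏ k : Fin n, x k ^ m a k) ≠ 0) :
    certificate ε m i p (p * q) x = certificate ε m i p q x :=
  certificate_p_elliptic_in_q_general K n ε m hm hcube hquad hlin i p q hp hp0 hq x hx
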